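/- Roth-type duality argument: let D : [0,1]^d → ℝ be integrable and suppose that for every r ∈ ℕ^d with |r| = n there exists an r-function f_r with ⟨D, f_r⟩ ≥ c > 0. Then ‖D‖₂ ≥ c · (#{r : |r| = n})^{1/2} ≳_d c · n^{(d-1)/2}. -/

import Mathlib

/-!
A coarser Haar function is constant on every dyadic interval of a finer level, and Haar
functions have mean zero, so the Haar functions of distinct dyadic boxes are orthogonal and the
`r`-functions `f_r`, `|r| = n`, form an orthonormal family on `[0,1)^d`. Testing `D` against
`F = ∑ f_r`, the inequality `0 ≤ ∫ (D - c F)² = ∫ D² - 2c ⟨D, F⟩ + c² N` with `⟨D, F⟩ ≥ c N`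
gives `c² N ≤ ∫ D²`, where `N = #{r : |r| = n}`. Finally `N ≥ (⌊n / (d-1)⌋ + 1)^(d-1)`, since
every choice of the first `d - 1` entries of `r` in `[0, n / (d-1)]` extends to some `|r| = n`.
-/

open MeasureTheory Finset

noncomputable section

/-- The dyadic interval `[k/2^m, (k+1)/2^m)`. -/
def dyadI (m k : ℕ) : Set ℝ := Set.Ico ((k : ℝ) / 2 ^ m) (((k : ℝ) + 1) / 2 ^ m)

/-- The `L^∞`-normalized Haar function of the dyadic interval `dyadI m k`:
`-1` on the left half, `+1` on the right half, `0` elsewhere. -/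
def haar (m k : ℕ) : ℝ → ℝ :=
  (dyadI (m + 1) (2 * k + 1)).indicator (fun _ => (1 : ℝ))
    - (dyadI (m + 1) (2 * k)).indicator (fun _ => (1 : ℝ))

/-- The Haar function of the dyadic box with side lengths `2^{-r i}` and positions `k i`. -/
def haarBox {d : ℕ} (r k : Fin d → ℕ) : (Fin d → ℝ) → ℝ :=
  fun x => ∏ i, haar (r i) (k i) (x i)

/-- The unit cube `[0,1)^d`. -/
def unitCube (d : ℕ) : Set (Fin d → ℝ) := Set.univ.pi fun _ => Set.Ico (0 : ℝ) 1

/-- Index set for positions of dyadic boxes of level vector `r`. -/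
def boxIdx (d : ℕ) (r : Fin d → ℕ) : Finset (Fin d → ℕ) :=
  Fintype.piFinset fun i => Finset.range (2 ^ r i)

/-- The level vectors `r ∈ ℕ^d` with `|r| = r₁ + ⋯ + r_d = n`. -/
def levIdx (d n : ℕ) : Finset (Fin d → ℕ) :=
  (Fintype.piFinset fun _ : Fin d => Finset.range (n + 1)).filter fun r => ∑ i, r i = n

lemma mem_dyadI_iff {m k : ℕ} {x : ℝ} : x ∈ dyadI m k ↔ ⌊x * 2 ^ m⌋ = k := by
  rw [Int.floor_eq_iff, dyadI, Set.mem_Ico, div_le_iff₀ (by positivity),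
    lt_div_iff₀ (by positivity)]
  push_cast
  rfl

lemma div_two_pow_mem_dyadI (m k : ℕ) : (k : ℝ) / 2 ^ m ∈ dyadI m k := by
  rw [mem_dyadI_iff, div_mul_cancel₀ _ (by positivity), Int.floor_natCast]

lemma floor_mul_two_pow_of_mem_dyadI {a b l : ℕ} {x : ℝ} (hab : a ≤ b) (hx : x ∈ dyadI b l) :
    ⌊x * 2 ^ a⌋ = (l : ℤ) / 2 ^ (b - a) := by
  rw [mem_dyadI_iff] at hx
  have : x * 2 ^ a = x * 2 ^ b / ((2 ^ (b - a) : ℕ) : ℝ) := by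
    rw [Nat.cast_pow, Nat.cast_ofNat, eq_div_iff (by positivity), mul_assoc, ← pow_add,
      Nat.add_sub_cancel' hab]
  rw [this, Int.floor_div_natCast, hx]
  push_cast
  rfl

lemma measurableSet_dyadI (m k : ℕ) : MeasurableSet (dyadI m k) := measurableSet_Ico

lemma volume_real_dyadI (m k : ℕ) : volume.real (dyadI m k) = (2 ^ m : ℝ)⁻¹ := by
  rw [dyadI, Real.volume_real_Ico_of_le (by gcongr; linarith)]
  field_simp
  ring

lemma integrable_indicator_dyadI (m k : ℕ) :
    Integrable ((dyadI m k).indicator fun _ => (1 : ℝ)) :=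
  (integrable_indicator_iff (measurableSet_dyadI m k)).2
    (integrableOn_const measure_Ico_lt_top.ne)

lemma measurable_haar (m k : ℕ) : Measurable (haar m k) :=
  (measurable_const.indicator (measurableSet_dyadI _ _)).sub
    (measurable_const.indicator (measurableSet_dyadI _ _))

lemma abs_haar_le_one (m k : ℕ) (x : ℝ) : |haar m k x| ≤ 1 := by
  classical
  simp only [haar, Pi.sub_apply, Set.indicator_apply, mem_dyadI_iff]
  split_ifs <;> norm_num

lemma haar_eq_zero_of_notMem {m k : ℕ} {x : ℝ} (hx : x ∉ dyadI m k) : haar m k x = 0 := by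
  have hsub : ∀ j, j / 2 = k → dyadI (m + 1) j ⊆ dyadI m k := fun j hj y hy => by
    have := floor_mul_two_pow_of_mem_dyadI (Nat.le_add_right m 1) hy
    rw [Nat.add_sub_cancel_left] at this
    rw [mem_dyadI_iff]
    omega
  simp only [haar, Pi.sub_apply]
  rw [Set.indicator_of_notMem fun h => hx (hsub _ (by omega) h),
    Set.indicator_of_notMem fun h => hx (hsub _ (by omega) h), sub_zero]

lemma haar_eq_of_floor_eq {m k : ℕ} {x y : ℝ} (h : ⌊x * 2 ^ (m + 1)⌋ = ⌊y * 2 ^ (m + 1)⌋) :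
    haar m k x = haar m k y := by
  classical
  simp only [haar, Pi.sub_apply, Set.indicator_apply, mem_dyadI_iff, h]

lemma integral_haar (m k : ℕ) : ∫ x, haar m k x = 0 := by
  simp only [haar, Pi.sub_apply]
  rw [integral_sub (integrable_indicator_dyadI _ _) (integrable_indicator_dyadI _ _),
    integral_indicator_const _ (measurableSet_dyadI _ _),
    integral_indicator_const _ (measurableSet_dyadI _ _), volume_real_dyadI, volume_real_dyadI,
    sub_self]

lemma integral_haar_mul_haar_of_lt {a b : ℕ} (hab : a < b) (k l : ℕ) :
    ∫ x, haar a k x * haar b l x = 0 := by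
  have hconst : ∀ x, haar a k x * haar b l x = haar a k ((l : ℝ) / 2 ^ b) * haar b l x := by
    intro x
    by_cases hx : x ∈ dyadI b l
    · rw [haar_eq_of_floor_eq (floor_mul_two_pow_of_mem_dyadI hab hx ▸
        (floor_mul_two_pow_of_mem_dyadI hab (div_two_pow_mem_dyadI b l)).symm)]
    · rw [haar_eq_zero_of_notMem hx, mul_zero, mul_zero]
  simp_rw [hconst]
  rw [integral_const_mul, integral_haar, mul_zero]

lemma haar_mul_haar_self (m k : ℕ) (x : ℝ) :
    haar m k x * haar m k x = (dyadI (m + 1) (2 * k + 1)).indicator (fun _ => 1) x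
      + (dyadI (m + 1) (2 * k)).indicator (fun _ => 1) x := by
  classical
  simp only [haar, Pi.sub_apply, Set.indicator_apply, mem_dyadI_iff]
  split_ifs <;> first | (push_cast at *; omega) | norm_num

lemma integral_haar_mul_haar (a b k l : ℕ) :
    ∫ x, haar a k x * haar b l x = if a = b ∧ k = l then (2 ^ a : ℝ)⁻¹ else 0 := by
  rcases lt_trichotomy a b with hab | rfl | hab
  · rw [integral_haar_mul_haar_of_lt hab, if_neg fun h => hab.ne h.1]
  · by_cases hkl : k = l
    · subst hkl
      rw [if_pos ⟨rfl, rfl⟩]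
      simp_rw [haar_mul_haar_self]
      rw [integral_add (integrable_indicator_dyadI _ _) (integrable_indicator_dyadI _ _),
        integral_indicator_const _ (measurableSet_dyadI _ _),
        integral_indicator_const _ (measurableSet_dyadI _ _), volume_real_dyadI,
        volume_real_dyadI, pow_succ, smul_eq_mul]
      ring
    · have hzero : ∀ x, haar a k x * haar a l x = 0 := fun x => by
        by_cases hx : x ∈ dyadI a k
        · have : x ∉ dyadI a l := fun h => hkl (by
            rw [mem_dyadI_iff] at hx h; exact_mod_cast hx.symm.trans h)
          rw [haar_eq_zero_of_notMem this, mul_zero]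
        · rw [haar_eq_zero_of_notMem hx, zero_mul]
      simp_rw [hzero, integral_zero]
      rw [if_neg fun h => hkl h.2]
  · simp_rw [mul_comm (haar a k _)]
    rw [integral_haar_mul_haar_of_lt hab, if_neg fun h => hab.ne' h.1]

section Cube

variable {d : ℕ}

instance : IsFiniteMeasure (volume.restrict (unitCube d)) :=
  isFiniteMeasure_restrict.2 <| by simp [unitCube, volume_pi_pi]

lemma integrableOn_unitCube_of_abs_le {f : (Fin d → ℝ) → ℝ} (hf : Measurable f) (C : ℝ)
    (hC : ∀ x, |f x| ≤ C) : IntegrableOn f (unitCube d) :=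
  Integrable.of_bound hf.aestronglyMeasurable C (ae_of_all _ hC)

lemma measurable_haarBox (r k : Fin d → ℕ) : Measurable (haarBox r k) :=
  Finset.measurable_prod _ fun i _ => (measurable_haar _ _).comp (measurable_pi_apply i)

lemma abs_haarBox_le_one (r k : Fin d → ℕ) (x : Fin d → ℝ) : |haarBox r k x| ≤ 1 := by
  rw [haarBox, Finset.abs_prod]
  exact Finset.prod_le_one (fun i _ => abs_nonneg _) fun i _ => abs_haar_le_one _ _ _

lemma dyadI_subset_Ico {m k : ℕ} (hk : k < 2 ^ m) : dyadI m k ⊆ Set.Ico 0 1 :=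
  Set.Ico_subset_Ico (by positivity) <| (div_le_one (by positivity)).2 <| by exact_mod_cast hk

lemma haarBox_eq_zero_of_notMem_unitCube {r k : Fin d → ℕ} (hk : k ∈ boxIdx d r)
    {x : Fin d → ℝ} (hx : x ∉ unitCube d) : haarBox r k x = 0 := by
  simp only [unitCube, Set.mem_pi, Set.mem_univ, true_implies, not_forall] at hx
  obtain ⟨i, hi⟩ := hx
  have hki : k i < 2 ^ r i := Finset.mem_range.1 (Fintype.mem_piFinset.1 hk i)
  exact Finset.prod_eq_zero (Finset.mem_univ i)
    (haar_eq_zero_of_notMem fun h => hi (dyadI_subset_Ico hki h))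

lemma setIntegral_haarBox_mul_haarBox {r s k l : Fin d → ℕ} (hk : k ∈ boxIdx d r) :
    ∫ x in unitCube d, haarBox r k x * haarBox s l x
      = if r = s ∧ k = l then (2 ^ ∑ i, r i : ℝ)⁻¹ else 0 := by
  rw [setIntegral_eq_integral_of_forall_compl_eq_zero fun x hx => by
    rw [haarBox_eq_zero_of_notMem_unitCube hk hx, zero_mul]]
  simp only [haarBox, ← Finset.prod_mul_distrib]
  rw [integral_fintype_prod_volume_eq_prod (fun i t => haar (r i) (k i) t * haar (s i) (l i) t)]
  simp only [integral_haar_mul_haar, Finset.prod_ite_zero, Finset.mem_univ, true_implies,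
    forall_and, Finset.prod_inv_distrib, Finset.prod_pow_eq_pow_sum, funext_iff]

lemma card_boxIdx (r : Fin d → ℕ) : (boxIdx d r).card = 2 ^ ∑ i, r i := by
  rw [boxIdx, Fintype.card_piFinset]
  simp only [Finset.card_range, Finset.prod_pow_eq_pow_sum]

end Cube

section RFunction

variable {d : ℕ}

/-- An `r`-function of the paper when every `ε k` is a sign `±1`. -/
def rFunction (r : Fin d → ℕ) (ε : (Fin d → ℕ) → ℝ) (x : Fin d → ℝ) : ℝ :=
  ∑ k ∈ boxIdx d r, ε k * haarBox r k x

lemma measurable_rFunction (r : Fin d → ℕ) (ε : (Fin d → ℕ) → ℝ) :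
    Measurable (rFunction r ε) :=
  Finset.measurable_sum _ fun k _ => (measurable_haarBox r k).const_mul _

lemma abs_rFunction_le (r : Fin d → ℕ) (ε : (Fin d → ℕ) → ℝ) (x : Fin d → ℝ) :
    |rFunction r ε x| ≤ ∑ k ∈ boxIdx d r, |ε k| := by
  refine (Finset.abs_sum_le_sum_abs _ _).trans (Finset.sum_le_sum fun k _ => ?_)
  rw [abs_mul]
  exact mul_le_of_le_one_right (abs_nonneg _) (abs_haarBox_le_one r k x)

lemma integrableOn_mul_rFunction {g : (Fin d → ℝ) → ℝ} (hg : IntegrableOn g (unitCube d))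
    (r : Fin d → ℕ) (ε : (Fin d → ℕ) → ℝ) :
    IntegrableOn (fun x => g x * rFunction r ε x) (unitCube d) :=
  Integrable.mul_bdd hg (measurable_rFunction r ε).aestronglyMeasurable
    (ae_of_all _ fun x => by rw [Real.norm_eq_abs]; exact abs_rFunction_le r ε x)

lemma integrableOn_rFunction (r : Fin d → ℕ) (ε : (Fin d → ℕ) → ℝ) :
    IntegrableOn (rFunction r ε) (unitCube d) :=
  integrableOn_unitCube_of_abs_le (measurable_rFunction r ε) _ (abs_rFunction_le r ε)

lemma setIntegral_rFunction_mul_rFunction (r s : Fin d → ℕ) (ε ε' : (Fin d → ℕ) → ℝ) :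
    ∫ x in unitCube d, rFunction r ε x * rFunction s ε' x
      = if r = s then ∑ k ∈ boxIdx d r, ε k * ε' k * (2 ^ ∑ i, r i : ℝ)⁻¹ else 0 := by
  have hint : ∀ k l, IntegrableOn (fun x => haarBox r k x * haarBox s l x) (unitCube d) :=
    fun k l => integrableOn_unitCube_of_abs_le ((measurable_haarBox r k).mul
      (measurable_haarBox s l)) 1 fun x => by
        rw [abs_mul]
        exact mul_le_one₀ (abs_haarBox_le_one r k x) (abs_nonneg _) (abs_haarBox_le_one s l x)
  have hterm : ∀ k ∈ boxIdx d r, ∫ x in unitCube d, ∑ l ∈ boxIdx d s,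
      ε k * ε' l * (haarBox r k x * haarBox s l x)
        = if r = s then ε k * ε' k * (2 ^ ∑ i, r i : ℝ)⁻¹ else 0 := fun k hk => by
    rw [integral_finsetSum _ fun l _ => (hint k l).const_mul _]
    simp only [integral_const_mul, setIntegral_haarBox_mul_haarBox hk]
    split_ifs with hrs
    · subst hrs
      simp [hk]
    · simp [hrs]
  simp only [rFunction, Finset.sum_mul_sum, mul_mul_mul_comm]
  rw [integral_finsetSum _ fun k _ => integrable_finsetSum _ fun l _ => (hint k l).const_mul _,
    Finset.sum_congr rfl hterm, Finset.sum_ite_irrel, Finset.sum_const_zero]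

lemma setIntegral_rFunction_mul_self {r : Fin d → ℕ} {ε : (Fin d → ℕ) → ℝ}
    (hε : ∀ k ∈ boxIdx d r, ε k = 1 ∨ ε k = -1) :
    ∫ x in unitCube d, rFunction r ε x * rFunction r ε x = 1 := by
  have hsq : ∀ k ∈ boxIdx d r, ε k * ε k * (2 ^ ∑ i, r i : ℝ)⁻¹ = (2 ^ ∑ i, r i : ℝ)⁻¹ :=
    fun k hk => by rcases hε k hk with h | h <;> simp [h]
  rw [setIntegral_rFunction_mul_rFunction, if_pos rfl, Finset.sum_congr rfl hsq,
    Finset.sum_const, card_boxIdx, nsmul_eq_mul]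
  push_cast
  exact mul_inv_cancel₀ (by positivity)

end RFunction

section Duality

variable {α : Type*} [MeasurableSpace α] {μ : Measure α}

lemma two_mul_integral_mul_sub_le_integral_sq {D F : α → ℝ} (hD : Integrable (fun x => D x ^ 2) μ)
    (hDF : Integrable (fun x => D x * F x) μ) (hF : Integrable (fun x => F x * F x) μ) (t : ℝ) :
    2 * t * ∫ x, D x * F x ∂μ - t ^ 2 * ∫ x, F x * F x ∂μ ≤ ∫ x, D x ^ 2 ∂μ := by
  have hsq : ∀ x, (D x - t * F x) ^ 2
      = D x ^ 2 - 2 * t * (D x * F x) + t ^ 2 * (F x * F x) := fun x => by ring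
  have h0 : 0 ≤ ∫ x, (D x - t * F x) ^ 2 ∂μ := integral_nonneg fun x => sq_nonneg _
  have hlin : Integrable (fun x => D x ^ 2 - 2 * t * (D x * F x)) μ := hD.sub (hDF.const_mul _)
  rw [integral_congr_ae (ae_of_all _ hsq), integral_add hlin (hF.const_mul _),
    integral_sub hD (hDF.const_mul _), integral_const_mul, integral_const_mul] at h0
  linarith

theorem sq_mul_card_le_integral_sq {ι : Type*} {D : α → ℝ} {f : ι → α → ℝ} {L : Finset ι}
    {c : ℝ} (hc : 0 ≤ c) (hD : Integrable (fun x => D x ^ 2) μ)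
    (hDf : ∀ i ∈ L, Integrable (fun x => D x * f i x) μ)
    (hff : ∀ i ∈ L, ∀ j ∈ L, Integrable (fun x => f i x * f j x) μ)
    (hnorm : ∀ i ∈ L, ∫ x, f i x * f i x ∂μ = 1)
    (horth : ∀ i ∈ L, ∀ j ∈ L, i ≠ j → ∫ x, f i x * f j x ∂μ = 0)
    (hcorr : ∀ i ∈ L, c ≤ ∫ x, D x * f i x ∂μ) :
    c ^ 2 * L.card ≤ ∫ x, D x ^ 2 ∂μ := by
  classical
  set F := fun x => ∑ i ∈ L, f i x
  have hDF_eq : ∀ x, D x * F x = ∑ i ∈ L, D x * f i x := fun x => Finset.mul_sum ..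
  have hFF_eq : ∀ x, F x * F x = ∑ i ∈ L, ∑ j ∈ L, f i x * f j x := fun x =>
    Finset.sum_mul_sum ..
  have hDF : Integrable (fun x => D x * F x) μ := by
    simp only [hDF_eq]
    exact integrable_finsetSum _ hDf
  have hFF : Integrable (fun x => F x * F x) μ := by
    simp only [hFF_eq]
    exact integrable_finsetSum _ fun i hi => integrable_finsetSum _ (hff i hi)
  have hcorrF : c * L.card ≤ ∫ x, D x * F x ∂μ := by
    simp only [hDF_eq]
    rw [integral_finsetSum _ hDf]
    simpa [mul_comm] using Finset.card_nsmul_le_sum L _ c hcorr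
  have hnormF : ∫ x, F x * F x ∂μ = L.card := by
    have hrow : ∀ i ∈ L, ∑ j ∈ L, ∫ x, f i x * f j x ∂μ = 1 := fun i hi => by
      rw [Finset.sum_eq_single_of_mem i hi fun j hj hji => horth i hi j hj hji.symm, hnorm i hi]
    simp only [hFF_eq]
    rw [integral_finsetSum _ fun i hi => integrable_finsetSum _ (hff i hi),
      Finset.sum_congr rfl fun i hi => (integral_finsetSum _ (hff i hi)).trans (hrow i hi)]
    simp
  have := two_mul_integral_mul_sub_le_integral_sq hD hDF hFF c
  rw [hnormF] at this
  nlinarith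

end Duality

lemma pow_le_card_levIdx (e n : ℕ) : (n / e + 1) ^ e ≤ (levIdx (e + 1) n).card := by
  have hcube : (Fintype.piFinset fun _ : Fin e => Finset.range (n / e + 1)).card
      = (n / e + 1) ^ e := by simp [Fintype.card_piFinset]
  rw [← hcube]
  refine Finset.card_le_card_of_injOn (fun g => Fin.snoc g (n - ∑ i, g i)) (fun g hg => ?_)
    fun g _ g' _ h => by simpa using congrArg Fin.init h
  simp only [Finset.mem_coe, Fintype.mem_piFinset, Finset.mem_range, Nat.lt_succ_iff] at hg
  have hsum : ∑ i, g i ≤ n := calc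
    ∑ i, g i ≤ ∑ _i : Fin e, n / e := Finset.sum_le_sum fun i _ => hg i
    _ = e * (n / e) := by simp
    _ ≤ n := Nat.mul_div_le n e
  simp only [Finset.mem_coe, levIdx, Finset.mem_filter, Fintype.mem_piFinset, Finset.mem_range,
    Nat.lt_succ_iff, Fin.sum_univ_castSucc, Fin.snoc_castSucc, Fin.snoc_last]
  refine ⟨fun i => ?_, by omega⟩
  induction i using Fin.lastCases with
  | last => simp
  | cast i => simpa using (hg i).trans (Nat.div_le_self n e)

lemma pow_le_pow_mul_card_levIdx {e : ℕ} (he : 1 ≤ e) (n : ℕ) :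
    n ^ e ≤ e ^ e * (levIdx (e + 1) n).card := calc
  n ^ e ≤ (e * (n / e + 1)) ^ e := Nat.pow_le_pow_left (Nat.lt_mul_div_succ n he).le e
  _ = e ^ e * (n / e + 1) ^ e := mul_pow ..
  _ ≤ e ^ e * (levIdx (e + 1) n).card := Nat.mul_le_mul_left _ (pow_le_card_levIdx e n)

lemma rpow_le_sqrt_card_levIdx {d : ℕ} (hd : 2 ≤ d) (n : ℕ) :
    ((d : ℝ) - 1) ^ (-(((d : ℝ) - 1) / 2)) * (n : ℝ) ^ (((d : ℝ) - 1) / 2)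
      ≤ Real.sqrt (levIdx d n).card := by
  obtain ⟨e, rfl⟩ : ∃ e, d = e + 1 := ⟨d - 1, by omega⟩
  have he : (0 : ℝ) < e := by exact_mod_cast (show 0 < e by omega)
  have hcount : (n : ℝ) ^ e ≤ (levIdx (e + 1) n).card * (e : ℝ) ^ e := by
    rw [mul_comm]
    exact_mod_cast pow_le_pow_mul_card_levIdx (by omega) n
  push_cast
  rw [add_sub_cancel_right]
  calc (e : ℝ) ^ (-((e : ℝ) / 2)) * (n : ℝ) ^ ((e : ℝ) / 2)
      = Real.sqrt ((n : ℝ) ^ e / (e : ℝ) ^ e) := by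
        rw [Real.sqrt_eq_rpow, Real.div_rpow (by positivity) (by positivity),
          ← Real.rpow_natCast, ← Real.rpow_natCast, ← Real.rpow_mul (by positivity),
          ← Real.rpow_mul he.le, Real.rpow_neg he.le, div_eq_inv_mul, mul_comm]
        ring_nf
    _ ≤ Real.sqrt (levIdx (e + 1) n).card :=
        Real.sqrt_le_sqrt (div_le_of_le_mul₀ (by positivity) (by positivity) hcount)

/-- Roth-type duality: if `D` is integrable on `[0,1]^d` and for every `r` with `|r| = n`
there is an `r`-function `f_r` with `⟨D, f_r⟩ ≥ c > 0`, then
`‖D‖₂ ≥ c (#{r : |r| = n})^{1/2} ≥ c·C_d·n^{(d-1)/2}`. -/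
theorem stmt_11 (d : ℕ) (hd : 2 ≤ d) :
    ∃ C : ℝ, 0 < C ∧ ∀ n : ℕ, 1 ≤ n → ∀ (c : ℝ), 0 < c →
      ∀ D : (Fin d → ℝ) → ℝ, IntegrableOn D (unitCube d) →
        IntegrableOn (fun x => (D x) ^ 2) (unitCube d) →
        (∀ r ∈ levIdx d n, ∃ ε : (Fin d → ℕ) → ℝ,
          (∀ k ∈ boxIdx d r, ε k = 1 ∨ ε k = -1) ∧
          c ≤ ∫ x in unitCube d, D x * ∑ k ∈ boxIdx d r, ε k * haarBox r k x) →
        c * Real.sqrt ((levIdx d n).card) ≤ Real.sqrt (∫ x in unitCube d, (D x) ^ 2) ∧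
        c * C * (n : ℝ) ^ (((d : ℝ) - 1) / 2)
          ≤ Real.sqrt (∫ x in unitCube d, (D x) ^ 2) := by
  have hd' : (0 : ℝ) < d - 1 := by
    rw [sub_pos]
    exact_mod_cast (show 1 < d by omega)
  refine ⟨((d : ℝ) - 1) ^ (-(((d : ℝ) - 1) / 2)), Real.rpow_pos_of_pos hd' _, ?_⟩
  intro n _ c hc D hD hD2 h
  choose! ε hsign hcorr using h
  have hsq : c ^ 2 * (levIdx d n).card ≤ ∫ x in unitCube d, D x ^ 2 :=
    sq_mul_card_le_integral_sq (f := fun r => rFunction r (ε r)) hc.le hD2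
      (fun r _ => integrableOn_mul_rFunction hD r (ε r))
      (fun r _ s _ => integrableOn_mul_rFunction (integrableOn_rFunction r (ε r)) s (ε s))
      (fun r hr => setIntegral_rFunction_mul_self (hsign r hr))
      (fun r _ s _ hrs => by rw [setIntegral_rFunction_mul_rFunction, if_neg hrs])
      hcorr
  have hbound : c * Real.sqrt (levIdx d n).card ≤ Real.sqrt (∫ x in unitCube d, D x ^ 2) := by
    rw [← Real.sqrt_sq hc.le, ← Real.sqrt_mul (sq_nonneg c)]
    exact Real.sqrt_le_sqrt hsq
  refine ⟨hbound, ?_⟩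
  rw [mul_assoc]
  exact (mul_le_mul_of_nonneg_left (rpow_le_sqrt_card_levIdx hd n) hc.le).trans hbound
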